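/- Suppose a mixed strategy profile x and reals ū^i, u^i_s, r^i_s, g^i_s, b^i_s ∈ {0,1} (for all players i and s ∈ S_i) satisfy the MIMLP3 constraints — u^i_s = u_i(s, x), ū^i ≥ u^i_s, r^i_s = ū^i − u^i_s, r^i_s ≥ 0, r^i_s ≤ U^i b^i_s, g^i_s ≥ x^i(s), g^i_s ≥ 1 − b^i_s. Then the objective value ∑_{i=1}^n ∑_{s∈S_i} (g^i_s − (1 − b^i_s)) is ≥ 0, and if it equals 0 then x is a Nash equilibrium. -/

import Mathlib

open Finset

/-- Expected payoff `U_i(x)` of player `i` under the mixed strategy profile `x`. -/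
def expPayoff {n : ℕ} {S : Fin n → Type} [∀ i, Fintype (S i)]
    (A : Fin n → (∀ j, S j) → ℝ) (x : ∀ i, S i → ℝ) (i : Fin n) : ℝ :=
  ∑ t : ∀ j, S j, A i t * ∏ j, x j (t j)

/-- Expected payoff `u_i(s, x)` of player `i` playing the pure strategy `s` while the
other players play their mixed strategies from `x`: summing over full pure profiles `t`
with `t i = s` is the same as summing over tuples `ŝ` of pure strategies of the others. -/
def purePayoff {n : ℕ} {S : Fin n → Type} [∀ i, Fintype (S i)] [∀ i, DecidableEq (S i)]
    (A : Fin n → (∀ j, S j) → ℝ) (x : ∀ i, S i → ℝ) (i : Fin n) (s : S i) : ℝ :=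
  ∑ t : ∀ j, S j, if t i = s then A i t * ∏ j ∈ Finset.univ.erase i, x j (t j) else 0

/-- `U^i`: the maximum difference of any two payoffs of player `i`. -/
noncomputable def payoffRange {n : ℕ} {S : Fin n → Type} [∀ i, Fintype (S i)]
    [∀ i, Nonempty (S i)] (A : Fin n → (∀ j, S j) → ℝ) (i : Fin n) : ℝ :=
  Finset.univ.sup' Finset.univ_nonempty (A i) - Finset.univ.inf' Finset.univ_nonempty (A i)

/-!
Each objective term `g − (1 − b)` is nonnegative: `g ≥ 1 − b = 1` if `b = 0`, and
`g ≥ x ≥ 0` if `b = 1`. So a zero objective makes every term vanish. Then `b = 1` forces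
`x^i(s) ≤ g = 0`, while `b = 0` forces the regret `r ≤ U^i b = 0`, i.e. `u_i(s, x) = ū^i`.
Thus `x^i` is supported on pure strategies attaining the common upper bound `ū^i` of all pure
payoffs, and since `U_i` is linear in `x^i`, no deviation `y^i` does better.
-/

lemma prod_update_apply_eq_mul_prod_erase {ι M : Type*} [Fintype ι] [DecidableEq ι]
    [CommMonoid M] {β : ι → Type*} (x : ∀ i, β i → M) (i : ι) (y : β i → M) (t : ∀ j, β j) :
    ∏ j, Function.update x i y j (t j) = y (t i) * ∏ j ∈ univ.erase i, x j (t j) := by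
  rw [← mul_prod_erase univ _ (mem_univ i), Function.update_self]
  congr 1
  exact prod_congr rfl fun j hj => by rw [Function.update_of_ne (ne_of_mem_erase hj)]

lemma expPayoff_update_self {n : ℕ} {S : Fin n → Type} [∀ i, Fintype (S i)]
    [∀ i, DecidableEq (S i)] (A : Fin n → (∀ j, S j) → ℝ) (x : ∀ i, S i → ℝ) (i : Fin n)
    (y : S i → ℝ) :
    expPayoff A (Function.update x i y) i = ∑ s, y s * purePayoff A x i s := by
  simp only [expPayoff, purePayoff, mul_sum, mul_ite, mul_zero]
  rw [sum_comm]
  refine sum_congr rfl fun t _ => ?_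
  rw [sum_ite_eq, if_pos (mem_univ _), prod_update_apply_eq_mul_prod_erase]
  ring

lemma expPayoff_eq_sum_mul_purePayoff {n : ℕ} {S : Fin n → Type} [∀ i, Fintype (S i)]
    [∀ i, DecidableEq (S i)] (A : Fin n → (∀ j, S j) → ℝ) (x : ∀ i, S i → ℝ) (i : Fin n) :
    expPayoff A x i = ∑ s, x i s * purePayoff A x i s := by
  simpa using expPayoff_update_self A x i (x i)

lemma expPayoff_update_le_of_support_attains_bound {n : ℕ} {S : Fin n → Type}
    [∀ i, Fintype (S i)] [∀ i, DecidableEq (S i)] (A : Fin n → (∀ j, S j) → ℝ)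
    (x : ∀ i, S i → ℝ) (i : Fin n) (c : ℝ) (hx1 : ∑ s, x i s = 1)
    (hle : ∀ s, purePayoff A x i s ≤ c) (hsupp : ∀ s, x i s ≠ 0 → purePayoff A x i s = c)
    (y : S i → ℝ) (hy0 : ∀ s, 0 ≤ y s) (hy1 : ∑ s, y s = 1) :
    expPayoff A (Function.update x i y) i ≤ expPayoff A x i := by
  have hx : expPayoff A x i = c := by
    rw [expPayoff_eq_sum_mul_purePayoff]
    calc ∑ s, x i s * purePayoff A x i s = ∑ s, x i s * c :=
          sum_congr rfl fun s _ => by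
            rcases eq_or_ne (x i s) 0 with h | h
            · simp [h]
            · rw [hsupp s h]
      _ = c := by rw [← sum_mul, hx1, one_mul]
  rw [hx, expPayoff_update_self]
  calc ∑ s, y s * purePayoff A x i s ≤ ∑ s, y s * c :=
        sum_le_sum fun s _ => mul_le_mul_of_nonneg_left (hle s) (hy0 s)
    _ = c := by rw [← sum_mul, hy1, one_mul]

lemma mimlp3_term_nonneg {x g b : ℝ} (hb : b = 0 ∨ b = 1) (hx : 0 ≤ x) (hxg : x ≤ g)
    (hbg : 1 - b ≤ g) : 0 ≤ g - (1 - b) := by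
  rcases hb with rfl | rfl <;> linarith

lemma mimlp3_regret_eq_zero {x g b r U : ℝ} (hb : b = 0 ∨ b = 1) (hx : 0 < x) (hxg : x ≤ g)
    (hr0 : 0 ≤ r) (hrU : r ≤ U * b) (hterm : g - (1 - b) = 0) : r = 0 := by
  rcases hb with rfl | rfl <;> linarith

theorem mimlp3_objective_nonneg_and_optimal_gives_nash_general
    (n : ℕ) (S : Fin n → Type)
    [∀ i, Fintype (S i)] [∀ i, Nonempty (S i)] [∀ i, DecidableEq (S i)]
    (A : Fin n → (∀ j, S j) → ℝ)
    (x : ∀ i, S i → ℝ)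
    (hx0 : ∀ i s, 0 ≤ x i s) (hx1 : ∀ i, ∑ s, x i s = 1)
    (ubar : Fin n → ℝ) (u r g b : ∀ i, S i → ℝ)
    (hfeas : ∀ (i : Fin n) (s : S i),
        (b i s = 0 ∨ b i s = 1) ∧
        u i s = purePayoff A x i s ∧
        u i s ≤ ubar i ∧
        r i s = ubar i - u i s ∧
        0 ≤ r i s ∧
        r i s ≤ payoffRange A i * b i s ∧
        x i s ≤ g i s ∧
        1 - b i s ≤ g i s) :
    0 ≤ ∑ i, ∑ s, (g i s - (1 - b i s)) ∧
    (∑ i, ∑ s, (g i s - (1 - b i s)) = 0 →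
      ∀ (i : Fin n) (y : S i → ℝ), (∀ s, 0 ≤ y s) → ∑ s, y s = 1 →
      expPayoff A (Function.update x i y) i ≤ expPayoff A x i) := by
  have hterm : ∀ i s, 0 ≤ g i s - (1 - b i s) := fun i s =>
    have ⟨hb, _, _, _, _, _, hxg, hbg⟩ := hfeas i s
    mimlp3_term_nonneg hb (hx0 i s) hxg hbg
  refine ⟨sum_nonneg fun i _ => sum_nonneg fun s _ => hterm i s, fun hzero i => ?_⟩
  have hzero_i : ∀ s, g i s - (1 - b i s) = 0 := fun s =>
    (sum_eq_zero_iff_of_nonneg fun s _ => hterm i s).mp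
      ((sum_eq_zero_iff_of_nonneg fun i _ => sum_nonneg fun s _ => hterm i s).mp hzero i
        (mem_univ i)) s (mem_univ s)
  refine expPayoff_update_le_of_support_attains_bound A x i (ubar i) (hx1 i)
    (fun s => ?_) (fun s hs => ?_)
  · obtain ⟨-, hu, hle, -⟩ := hfeas i s
    exact hu ▸ hle
  · obtain ⟨hb, hu, -, hr, hr0, hrU, hxg, -⟩ := hfeas i s
    have := mimlp3_regret_eq_zero hb ((hx0 i s).lt_of_ne' hs) hxg hr0 hrU (hzero_i s)
    linarith

/-- If the mixed strategy profile `x` together with `ū^i`, `u^i_s`,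
`r^i_s`, `g^i_s` and binary `b^i_s` satisfies the MIMLP3 constraints, then the objective
value `∑ᵢ ∑_{s ∈ S_i} (g^i_s − (1 − b^i_s))` is `≥ 0`, and if it equals `0` then `x` is a
Nash equilibrium. -/
theorem mimlp3_objective_nonneg_and_optimal_gives_nash
    (n : ℕ) (hn : 2 ≤ n) (S : Fin n → Type)
    [∀ i, Fintype (S i)] [∀ i, Nonempty (S i)] [∀ i, DecidableEq (S i)]
    (A : Fin n → (∀ j, S j) → ℝ)
    (x : ∀ i, S i → ℝ)
    (hx0 : ∀ i s, 0 ≤ x i s) (hx1 : ∀ i, ∑ s, x i s = 1)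
    (ubar : Fin n → ℝ) (u r g b : ∀ i, S i → ℝ)
    (hfeas : ∀ (i : Fin n) (s : S i),
        (b i s = 0 ∨ b i s = 1) ∧
        u i s = purePayoff A x i s ∧
        u i s ≤ ubar i ∧
        r i s = ubar i - u i s ∧
        0 ≤ r i s ∧
        r i s ≤ payoffRange A i * b i s ∧
        x i s ≤ g i s ∧
        1 - b i s ≤ g i s) :
    0 ≤ ∑ i, ∑ s, (g i s - (1 - b i s)) ∧
    (∑ i, ∑ s, (g i s - (1 - b i s)) = 0 →
      ∀ (i : Fin n) (y : S i → ℝ), (∀ s, 0 ≤ y s) → ∑ s, y s = 1 →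
      expPayoff A (Function.update x i y) i ≤ expPayoff A x i) :=
  mimlp3_objective_nonneg_and_optimal_gives_nash_general n S A x hx0 hx1 ubar u r g b hfeas
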